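/- For each n ≥ 2, there exists a function g: P(N) → ℝ on N = {a,b,c,x_1,...,x_n} with g(∅)=0 that is submodular and monotone, satisfies g(a:c|b) = g(b:c|a) = 0, satisfies every instance (over disjoint subsets in place of A, B, C, X_1,...,X_p, with a,b,c fixed as the constrained parties) of the constrained inequality C_p for every p ≠ n, but violates the standard instance of C_n. Consequently, C_n cannot be written as a positive linear combination of instances of the basic inequalities (submodularity and monotonicity) and of {C_p}_{p≠n}, plus an arbitrary linear combination of the constraints. -/

import Mathlib

/-!
The counterexample `g` sees a set only through which of `a, b, c` it contains and how many
`x_i` it contains. Submodularity and monotonicity then reduce to finitely many linear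
inequalities between the coefficients of this profile, checked case by case.

On sets `S` of `x_i`'s one has `g(a:b|S) = 2n + 1 - 2|S| - 2[|S| = 1]` and `g(ab:c) = 2n - 1`,
while the terms `g(α_i)` cancel against `g(α_1 … α_p)` by disjointness. So an instance of `C_p`
has value `2 (n + p - ∑ (|α_i| + [|α_i| = 1])) - 1`. As `∑ |α_i| ≤ n`, this is negative only if
every `α_i` is a singleton and they cover all `n` of the `x_i`, that is, only for the standard
instance of `C_n`, where it equals `-1`.
-/

open Finset BigOperators

noncomputable section

/-- A set function is submodular if `f(M₁) + f(M₂) ≥ f(M₁ ∪ M₂) + f(M₁ ∩ M₂)`. -/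
def Submodular {N : Type*} [DecidableEq N] (f : Finset N → ℝ) : Prop :=
  ∀ M₁ M₂ : Finset N, f M₁ + f M₂ ≥ f (M₁ ∪ M₂) + f (M₁ ∩ M₂)

/-- The conditional mutual information `f(α:β|γ)` of a set function. -/
def cmi {N : Type*} [DecidableEq N] (f : Finset N → ℝ) (α β γ : Finset N) : ℝ :=
  -f γ + f (α ∪ γ) + f (β ∪ γ) - f (α ∪ β ∪ γ)

abbrev Idx (n : ℕ) := Sum (Fin 3) (Fin n)

/-- An instance, evaluated on a set function `g`, of the constrained inequality `C_p`
with constrained parties `a = inl 0`, `b = inl 1`, `c = inl 2`, evaluated on disjoint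
subsets `α_1, …, α_p` of `{x_1, …, x_n}`:
`∑ g(a:b|α_i) - (p-1) g(ab:c|∅) + ∑ g(α_i) - g(α_1 … α_p)`. -/
noncomputable def Cexpr {n : ℕ} (g : Finset (Idx n) → ℝ) (p : ℕ)
    (α : Fin p → Finset (Idx n)) : ℝ :=
  (∑ i, cmi g {Sum.inl 0} {Sum.inl 1} (α i)) -
    ((p : ℝ) - 1) * cmi g ({Sum.inl 0, Sum.inl 1} : Finset (Idx n)) {Sum.inl 2} ∅ +
    (∑ i, g (α i)) - g (Finset.univ.biUnion α)

section SetFunction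

variable {N : Type*} [DecidableEq N] {f : Finset N → ℝ}

theorem monotone_of_le_insert (h : ∀ M e, f M ≤ f (insert e M)) : Monotone f := by
  intro A B hAB
  rw [← union_sdiff_of_subset hAB]
  induction B \ A using Finset.induction_on with
  | empty => simp
  | insert d D _ ih => exact ih.trans (by rw [union_insert]; exact h _ d)

theorem insert_union_add_le (h : ∀ M e d, e ∉ M → d ∉ M → e ≠ d →
      f (insert e (insert d M)) + f M ≤ f (insert e M) + f (insert d M))
    (S D : Finset N) {e : N} (he : e ∉ S ∪ D) :
    f (insert e (S ∪ D)) + f S ≤ f (insert e S) + f (S ∪ D) := by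
  induction D using Finset.induction_on with
  | empty => simp
  | insert d D _ ih =>
    rw [union_insert] at he ⊢
    have he' : e ∉ S ∪ D := fun hm => he (mem_insert_of_mem hm)
    by_cases hd : d ∈ S ∪ D
    · rw [insert_eq_of_mem hd]
      exact ih he'
    · have hed : e ≠ d := fun hed => he (hed ▸ mem_insert_self e _)
      linarith [ih he', h (S ∪ D) e d he' hd hed]

theorem union_add_le (h : ∀ M e d, e ∉ M → d ∉ M → e ≠ d →
      f (insert e (insert d M)) + f M ≤ f (insert e M) + f (insert d M))
    {A C : Finset N} (hCA : C ⊆ A) (D : Finset N) (hAD : Disjoint A D) :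
    f (A ∪ D) + f C ≤ f A + f (C ∪ D) := by
  induction D using Finset.induction_on with
  | empty => simp
  | insert d D hdD ih =>
    rw [disjoint_insert_right] at hAD
    have hd : d ∉ C ∪ D ∪ A := by
      simp only [mem_union, not_or]
      exact ⟨⟨fun h => hAD.1 (hCA h), hdD⟩, hAD.1⟩
    have step := insert_union_add_le h (C ∪ D) A hd
    rw [union_right_comm, union_eq_right.mpr hCA] at step
    rw [union_insert, union_insert]
    linarith [ih hAD.2]

theorem submodular_of_insert_insert (h : ∀ M e d, e ∉ M → d ∉ M → e ≠ d →
      f (insert e (insert d M)) + f M ≤ f (insert e M) + f (insert d M)) :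
    Submodular f := by
  intro M₁ M₂
  have := union_add_le h (inter_subset_right (s₁ := M₂)) (M₂ \ M₁) disjoint_sdiff
  rw [union_sdiff_self_eq_union, show M₂ ∩ M₁ ∪ M₂ \ M₁ = M₂ from sup_inf_sdiff M₂ M₁,
    inter_comm] at this
  linarith

end SetFunction

namespace Finset

variable {α β : Type*}

theorem toLeft_eq_empty_of_forall_isRight {u : Finset (α ⊕ β)} (hu : ∀ x ∈ u, x.isRight) :
    u.toLeft = ∅ := by
  ext a
  simpa using fun h => by simpa using hu _ h

theorem toLeft_biUnion_eq_empty [DecidableEq α] [DecidableEq β] {ι : Type*} (s : Finset ι)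
    {t : ι → Finset (α ⊕ β)} (ht : ∀ i, (t i).toLeft = ∅) : (s.biUnion t).toLeft = ∅ := by
  ext a
  simpa using fun i _ h => by simpa [ht i] using mem_toLeft.mpr h

@[simp] theorem toRight_empty : (∅ : Finset (α ⊕ β)).toRight = ∅ := by ext; simp

@[simp] theorem toLeft_singleton_inr (b : β) : ({Sum.inr b} : Finset (α ⊕ β)).toLeft = ∅ := by
  ext; simp

@[simp] theorem toRight_singleton_inl (a : α) : ({Sum.inl a} : Finset (α ⊕ β)).toRight = ∅ := by
  ext; simp

theorem card_toRight_of_toLeft_eq_empty {u : Finset (α ⊕ β)} (hu : u.toLeft = ∅) :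
    #u.toRight = #u := by
  simpa [hu] using card_toLeft_add_card_toRight (u := u)

end Finset

namespace CnIndependent

theorem sum_add_ite_eq_one_lt {p n : ℕ} (hp : p ≠ n) (κ : Fin p → ℕ) (hκ : ∑ i, κ i ≤ n) :
    ∑ i, (κ i + if κ i = 1 then 1 else 0) < n + p := by
  rw [sum_add_distrib, sum_boole, Nat.cast_id]
  by_cases hall : ∀ i, κ i = 1
  · simp only [hall, sum_const, Finset.card_univ, Fintype.card_fin, smul_eq_mul, mul_one,
      filter_true] at hκ ⊢
    omega
  · obtain ⟨j, hj⟩ := not_forall.mp hall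
    have := card_lt_card (filter_ssubset (p := fun i => κ i = 1).mpr ⟨j, mem_univ j, hj⟩)
    rw [Finset.card_univ, Fintype.card_fin] at this
    omega

def u (n k : ℕ) : ℤ := 2 * n + 1 - 2 * k - if k = 1 then 2 else 0

def w (n k : ℕ) : ℤ := if k ≤ 1 then 3 * n - 2 else 3 * n - 3 * k

/-- The letters `0, 1, 2 : Fin 3` stand for `a, b, c`. The summand `16 * k` is a modular term
that makes the function monotone; it cancels in every balanced expression. -/
def profile (n : ℕ) (L : Finset (Fin 3)) (k : ℕ) : ℤ :=
  16 * k +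
    if 0 ∈ L ∨ 1 ∈ L then
      u n k + w n k + (if 0 ∈ L ∧ 1 ∈ L then w n k else 0) + (if 2 ∈ L ∧ k < n then 1 else 0)
    else if 2 ∈ L then 2 * n - 2 * k else 0

variable {n : ℕ}

theorem profile_insert_insert_le (hn : 2 ≤ n) (i j : Fin 3) (L : Finset (Fin 3)) {k : ℕ}
    (hk : k ≤ n) :
    profile n (insert i (insert j L)) k + profile n L k ≤
      profile n (insert i L) k + profile n (insert j L) k := by
  unfold profile u w
  fin_cases i <;> fin_cases j <;> simp <;>
    by_cases h0 : (0 : Fin 3) ∈ L <;> by_cases h1 : (1 : Fin 3) ∈ L <;>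
    by_cases h2 : (2 : Fin 3) ∈ L <;> simp [h0, h1, h2] <;> (try split_ifs) <;> omega

theorem profile_insert_succ_le (i : Fin 3) (L : Finset (Fin 3)) (k : ℕ) :
    profile n (insert i L) (k + 1) + profile n L k ≤
      profile n (insert i L) k + profile n L (k + 1) := by
  unfold profile u w
  fin_cases i <;> simp <;>
    by_cases h0 : (0 : Fin 3) ∈ L <;> by_cases h1 : (1 : Fin 3) ∈ L <;>
    by_cases h2 : (2 : Fin 3) ∈ L <;> simp [h0, h1, h2] <;> (try split_ifs) <;> omega

theorem profile_concave (L : Finset (Fin 3)) {k : ℕ} (hk : k + 2 ≤ n) :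
    profile n L (k + 2) + profile n L k ≤ 2 * profile n L (k + 1) := by
  unfold profile u w
  by_cases h0 : (0 : Fin 3) ∈ L <;> by_cases h1 : (1 : Fin 3) ∈ L <;>
    by_cases h2 : (2 : Fin 3) ∈ L <;> simp [h0, h1, h2] <;> (try split_ifs) <;> omega

theorem profile_le_insert (hn : 0 < n) (i : Fin 3) (L : Finset (Fin 3)) {k : ℕ} (hk : k ≤ n) :
    profile n L k ≤ profile n (insert i L) k := by
  unfold profile u w
  fin_cases i <;> simp <;>
    by_cases h0 : (0 : Fin 3) ∈ L <;> by_cases h1 : (1 : Fin 3) ∈ L <;>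
    by_cases h2 : (2 : Fin 3) ∈ L <;> simp [h0, h1, h2] <;> (try split_ifs) <;> omega

theorem profile_le_succ (L : Finset (Fin 3)) (k : ℕ) : profile n L k ≤ profile n L (k + 1) := by
  unfold profile u w
  by_cases h0 : (0 : Fin 3) ∈ L <;> by_cases h1 : (1 : Fin 3) ∈ L <;>
    by_cases h2 : (2 : Fin 3) ∈ L <;> simp [h0, h1, h2] <;> (try split_ifs) <;> omega

def g (n : ℕ) (M : Finset (Idx n)) : ℝ := profile n M.toLeft #M.toRight

theorem card_toRight_le (M : Finset (Idx n)) : #M.toRight ≤ n := by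
  simpa using card_le_univ M.toRight

theorem g_insert_insert_le (hn : 2 ≤ n) (M : Finset (Idx n)) {e f : Idx n} (he : e ∉ M)
    (hf : f ∉ M) (hef : e ≠ f) :
    g n (insert e (insert f M)) + g n M ≤ g n (insert e M) + g n (insert f M) := by
  rcases e with i | i <;> rcases f with j | j <;>
    simp only [g, toLeft_insert_inl, toLeft_insert_inr, toRight_insert_inl, toRight_insert_inr] <;>
    norm_cast
  · exact profile_insert_insert_le hn i j _ (card_toRight_le M)
  · rw [card_insert_of_notMem (mem_toRight.not.mpr hf)]
    exact profile_insert_succ_le i _ _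
  · rw [card_insert_of_notMem (mem_toRight.not.mpr he)]
    linarith [profile_insert_succ_le (n := n) j M.toLeft #M.toRight]
  · have hi : i ∉ insert j M.toRight := by
      simpa [Sum.inr_injective.ne_iff.mp hef] using he
    have hj : j ∉ M.toRight := mem_toRight.not.mpr hf
    have hk := card_toRight_le (insert (Sum.inr i) (insert (Sum.inr j) M))
    simp only [toRight_insert_inr, card_insert_of_notMem hi, card_insert_of_notMem hj] at hk ⊢
    rw [card_insert_of_notMem (mem_toRight.not.mpr he)]
    linarith [profile_concave (n := n) M.toLeft hk]

theorem g_le_insert (hn : 0 < n) (M : Finset (Idx n)) (e : Idx n) : g n M ≤ g n (insert e M) := by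
  by_cases he : e ∈ M
  · rw [insert_eq_of_mem he]
  rcases e with i | i <;>
    simp only [g, toLeft_insert_inl, toLeft_insert_inr, toRight_insert_inl, toRight_insert_inr]
  · exact_mod_cast profile_le_insert hn i _ (card_toRight_le M)
  · rw [card_insert_of_notMem (by simpa using he)]
    exact_mod_cast profile_le_succ _ _

theorem g_empty : g n ∅ = 0 := by simp [g, profile]

theorem g_of_toLeft_eq_empty {S : Finset (Idx n)} (hS : S.toLeft = ∅) : g n S = 16 * #S := by
  simp [g, profile, hS, card_toRight_of_toLeft_eq_empty hS]

theorem cmi_g_a_b {S : Finset (Idx n)} (hS : S.toLeft = ∅) :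
    cmi (g n) {Sum.inl 0} {Sum.inl 1} S = u n #S := by
  simp [cmi, g, profile, hS, card_toRight_of_toLeft_eq_empty hS]
  ring

theorem cmi_g_a_c_b : cmi (g n) {Sum.inl 0} {Sum.inl 2} {Sum.inl 1} = 0 := by
  simp [cmi, g, profile]
  ring

theorem cmi_g_b_c_a : cmi (g n) {Sum.inl 1} {Sum.inl 2} {Sum.inl 0} = 0 := by
  simp [cmi, g, profile]
  ring

theorem cmi_g_ab_c (hn : 0 < n) : cmi (g n) {Sum.inl 0, Sum.inl 1} {Sum.inl 2} ∅ = 2 * n - 1 := by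
  simp [cmi, g, profile, hn]

variable {p : ℕ} {α : Fin p → Finset (Idx n)}

theorem Cexpr_g_eq (hn : 0 < n) (hα : ∀ i, (α i).toLeft = ∅)
    (hd : ∀ i j, i ≠ j → Disjoint (α i) (α j)) :
    Cexpr (g n) p α = ((∑ i, u n #(α i) - (p - 1) * (2 * n - 1) : ℤ) : ℝ) := by
  simp only [Cexpr, cmi_g_a_b (hα _), cmi_g_ab_c hn, g_of_toLeft_eq_empty (hα _),
    g_of_toLeft_eq_empty (toLeft_biUnion_eq_empty univ hα), card_biUnion (fun i _ j _ hij => hd i j hij)]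
  push_cast
  rw [← mul_sum]
  ring

theorem sum_card_le (hα : ∀ i, (α i).toLeft = ∅) (hd : ∀ i j, i ≠ j → Disjoint (α i) (α j)) :
    ∑ i, #(α i) ≤ n := by
  rw [← card_biUnion (fun i _ j _ hij => hd i j hij),
    ← card_toRight_of_toLeft_eq_empty (toLeft_biUnion_eq_empty univ hα)]
  exact card_toRight_le _

theorem Cexpr_g_nonneg (hn : 0 < n) (hp : p ≠ n) (hα : ∀ i, (α i).toLeft = ∅)
    (hd : ∀ i j, i ≠ j → Disjoint (α i) (α j)) : 0 ≤ Cexpr (g n) p α := by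
  rw [Cexpr_g_eq hn hα hd, Int.cast_nonneg_iff]
  have hu : ∀ k, u n k = 2 * n + 1 - 2 * ((k + if k = 1 then 1 else 0 : ℕ) : ℤ) := by
    intro k
    unfold u
    split_ifs <;> push_cast <;> ring
  have key : ((∑ i, (#(α i) + if #(α i) = 1 then 1 else 0) : ℕ) : ℤ) < n + p := by
    exact_mod_cast sum_add_ite_eq_one_lt hp _ (sum_card_le hα hd)
  simp only [hu, sum_sub_distrib, ← mul_sum, sum_const, Finset.card_univ, Fintype.card_fin,
    nsmul_eq_mul, ← Nat.cast_sum]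
  linarith

theorem Cexpr_g_singleton (hn : 0 < n) : Cexpr (g n) n (fun i => {Sum.inr i}) = -1 := by
  rw [Cexpr_g_eq hn (by simp) (by simp)]
  simp [u]
  ring

end CnIndependent

/-- For each `n ≥ 2` there is a submodular, monotone set function `g` with `g(∅) = 0`
satisfying the constraints `g(a:c|b) = g(b:c|a) = 0` and every instance of `C_p` for every
`p ≠ n`, yet violating the standard instance of `C_n` (on `α_i = {x_i}`). Consequently,
no function satisfying the basic inequalities, the constraints and all those instances of
`{C_p}_{p ≠ n}` need satisfy `C_n`, so `C_n` is not a positive combination of them. -/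
theorem Cn_independent (n : ℕ) (hn : 2 ≤ n) :
    (∃ g : Finset (Idx n) → ℝ,
      g ∅ = 0 ∧ Submodular g ∧ (∀ α β : Finset (Idx n), α ⊆ β → g α ≤ g β) ∧
      cmi g {Sum.inl 0} {Sum.inl 2} {Sum.inl 1} = 0 ∧
      cmi g {Sum.inl 1} {Sum.inl 2} {Sum.inl 0} = 0 ∧
      (∀ (p : ℕ), p ≠ n → ∀ α : Fin p → Finset (Idx n),
        (∀ i, ∀ x ∈ α i, x.isRight = true) →
        (∀ i j, i ≠ j → Disjoint (α i) (α j)) →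
        Cexpr g p α ≥ 0) ∧
      Cexpr g n (fun i => {Sum.inr i}) < 0) ∧
    ¬ (∀ g : Finset (Idx n) → ℝ,
        g ∅ = 0 → Submodular g → (∀ α β : Finset (Idx n), α ⊆ β → g α ≤ g β) →
        cmi g {Sum.inl 0} {Sum.inl 2} {Sum.inl 1} = 0 →
        cmi g {Sum.inl 1} {Sum.inl 2} {Sum.inl 0} = 0 →
        (∀ (p : ℕ), p ≠ n → ∀ α : Fin p → Finset (Idx n),
          (∀ i, ∀ x ∈ α i, x.isRight = true) →
          (∀ i j, i ≠ j → Disjoint (α i) (α j)) →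
          Cexpr g p α ≥ 0) →
        Cexpr g n (fun i => {Sum.inr i}) ≥ 0) := by
  open CnIndependent in
  have hn₀ : 0 < n := by omega
  have hsub : Submodular (g n) :=
    submodular_of_insert_insert fun M _ _ he hf hef => g_insert_insert_le hn M he hf hef
  have hmono := monotone_of_le_insert (g_le_insert hn₀)
  have hCp (p : ℕ) (hp : p ≠ n) (α : Fin p → Finset (Idx n))
      (hα : ∀ i, ∀ x ∈ α i, x.isRight = true) (hd : ∀ i j, i ≠ j → Disjoint (α i) (α j)) :
      Cexpr (g n) p α ≥ 0 :=
    Cexpr_g_nonneg hn₀ hp (fun i => toLeft_eq_empty_of_forall_isRight (hα i)) hd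
  have hCn : Cexpr (g n) n (fun i => {Sum.inr i}) < 0 := by
    rw [Cexpr_g_singleton hn₀]
    norm_num
  exact ⟨⟨g n, g_empty, hsub, hmono, cmi_g_a_c_b, cmi_g_b_c_a, hCp, hCn⟩,
    fun H => (H _ g_empty hsub hmono cmi_g_a_c_b cmi_g_b_c_a hCp).not_gt hCn⟩
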